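/- Suppose Γ is a valid segment big-M, p(s) ≥ 0 for all s ∈ S, and U(s) > 0 for all s ∈ S. Let (y, z) be an element of the reformulated feasible set RDP, and define ỹ : S_O → ℝ by ỹ(s_O) = 1 if s_O is z-compatible and ỹ(s_O) = 0 otherwise. Then (ỹ, z) is also an element of RDP and Σ_{s_O∈S_O} 𝔼_U(s_O) ỹ(s_O) ≥ Σ_{s_O∈S_O} 𝔼_U(s_O) y(s_O); hence the maximum of the reformulated objective over RDP is attained at a solution with binary observation variables. -/
import Mathlib


open Finset

namespace InfluenceDiagram

attribute [local instance] Classical.propDecidable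

variable {ν : Type} [Fintype ν] [DecidableEq ν]

noncomputable section
variable (St : ν → Type) [∀ n, Fintype (St n)] [∀ n, DecidableEq (St n)] [∀ n, Nonempty (St n)]
  (D : Finset ν) (I : ν → Finset ν)

/-- A segment over a subset `M` of nodes: a choice of state for each node in `M`. -/
abbrev Seg (M : Finset ν) : Type := ∀ n : M, St n.1

/-- A path: a choice of state for every (chance or decision) node. -/
abbrev Path : Type := ∀ n, St n

/-- A z-assignment: for each decision node `d`, each alternative `s_d` and each
information state `s_{I(d)}`, a real number `z(s_d ∣ s_{I(d)})`. -/
abbrev ZAsg : Type := (d : ν) → d ∈ D → St d → Seg St (I d) → ℝ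

/-- `z` is a (binary, locally exhaustive) decision strategy. -/
def Strategy (z : ZAsg St D I) : Prop :=
  (∀ (d : ν) (hd : d ∈ D) (sd : St d) (sI : Seg St (I d)),
      z d hd sd sI = 0 ∨ z d hd sd sI = 1) ∧
  ∀ (d : ν) (hd : d ∈ D) (sI : Seg St (I d)), ∑ sd : St d, z d hd sd sI = 1

/-- A path is compatible with `z` if every decision on it is selected by `z`. -/
def PathCompat (z : ZAsg St D I) (s : Path St) : Prop :=
  ∀ (d : ν) (hd : d ∈ D), z d hd (s d) (fun n => s n.1) = 1

/-- The Decision Programming feasible set (constraints (2)-(5) of the paper). -/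
def DP (p : Path St → ℝ) (Γ z : ZAsg St D I) (x : Path St → ℝ) : Prop :=
  Strategy St D I z ∧
  (∀ s : Path St, 0 < p s → 0 ≤ x s ∧ x s ≤ 1) ∧
  ∀ (d : ν) (hd : d ∈ D) (sd : St d) (sI : Seg St (I d)),
    ∑ s ∈ univ.filter (fun s : Path St =>
        0 < p s ∧ s d = sd ∧ ∀ n : I d, s n.1 = sI n), x s
      ≤ Γ d hd sd sI * z d hd sd sI

/-- `Γ` is a valid path big-M: for every strategy `z`, the number of `z`-compatible
paths in `E^>(s_d, s_{I(d)})` is at most `Γ(s_d ∣ s_{I(d)})`. -/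
def ValidPathBigM (p : Path St → ℝ) (Γ : ZAsg St D I) : Prop :=
  ∀ z : ZAsg St D I, Strategy St D I z →
    ∀ (d : ν) (hd : d ∈ D) (sd : St d) (sI : Seg St (I d)),
      ((univ.filter (fun s : Path St =>
          PathCompat St D I z s ∧ 0 < p s ∧ s d = sd ∧ ∀ n : I d, s n.1 = sI n)).card : ℝ)
        ≤ Γ d hd sd sI

/-- The chance nodes observed by some decision node. -/
def CIset : Finset ν := Dᶜ.filter fun c => ∃ d ∈ D, c ∈ I d

/-- The observation set `O = D ∪ C_I`. -/
def obsSet : Finset ν := D ∪ CIset D I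

lemma mem_obsSet_of_mem_D {d : ν} (hd : d ∈ D) : d ∈ obsSet D I :=
  Finset.mem_union_left _ hd

lemma mem_obsSet_of_mem_CI {n : ν} (hn : n ∈ CIset D I) : n ∈ obsSet D I :=
  Finset.mem_union_right _ hn

lemma mem_obsSet_of_mem_I {d n : ν} (hd : d ∈ D) (hn : n ∈ I d) : n ∈ obsSet D I := by
  by_cases h : n ∈ D
  · exact Finset.mem_union_left _ h
  · exact Finset.mem_union_right _ (Finset.mem_filter.mpr ⟨Finset.mem_compl.mpr h, ⟨d, hd, hn⟩⟩)

/-- Observable segments: segments over the observation set `O`. -/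
abbrev OSeg : Type := Seg St (obsSet D I)

/-- An observable segment is compatible with `z` if every decision on it is selected by `z`. -/
def SegCompat (z : ZAsg St D I) (t : OSeg St D I) : Prop :=
  ∀ (d : ν) (hd : d ∈ D),
    z d hd (t ⟨d, mem_obsSet_of_mem_D D I hd⟩)
      (fun n => t ⟨n.1, mem_obsSet_of_mem_I D I hd n.2⟩) = 1

/-- The reformulated Decision Programming feasible set. -/
def RDP (Γ z : ZAsg St D I) (y : OSeg St D I → ℝ) : Prop :=
  Strategy St D I z ∧
  (∀ t : OSeg St D I, 0 ≤ y t ∧ y t ≤ 1) ∧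
  ∀ (d : ν) (hd : d ∈ D) (sd : St d) (sI : Seg St (I d)),
    ∑ t ∈ univ.filter (fun t : OSeg St D I =>
        t ⟨d, mem_obsSet_of_mem_D D I hd⟩ = sd ∧
        ∀ n : I d, t ⟨n.1, mem_obsSet_of_mem_I D I hd n.2⟩ = sI n), y t
      ≤ Γ d hd sd sI * z d hd sd sI

/-- `Γ` is a valid segment big-M: for every strategy `z`, the number of `z`-compatible
observable segments in `E_O(s_d, s_{I(d)})` is at most `Γ(s_d ∣ s_{I(d)})`. -/
def ValidSegBigM (Γ : ZAsg St D I) : Prop :=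
  ∀ z : ZAsg St D I, Strategy St D I z →
    ∀ (d : ν) (hd : d ∈ D) (sd : St d) (sI : Seg St (I d)),
      ((univ.filter (fun t : OSeg St D I =>
          SegCompat St D I z t ∧
          t ⟨d, mem_obsSet_of_mem_D D I hd⟩ = sd ∧
          ∀ n : I d, t ⟨n.1, mem_obsSet_of_mem_I D I hd n.2⟩ = sI n)).card : ℝ)
        ≤ Γ d hd sd sI

/-- Expected utility `𝔼_U(s_O) = Σ_{s ∈ E(s_O)} p(s) U(s)` of an observable segment. -/
def segEU (p U : Path St → ℝ) (t : OSeg St D I) : ℝ :=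
  ∑ s ∈ univ.filter (fun s : Path St => ∀ n : obsSet D I, s n.1 = t n), p s * U s

/-- The Decision Programming objective `Σ_{s ∈ S^>} p(s) U(s) x(s)`. -/
def DPobj (p U : Path St → ℝ) (x : Path St → ℝ) : ℝ :=
  ∑ s ∈ univ.filter (fun s : Path St => 0 < p s), p s * U s * x s

/-- The reformulated objective `Σ_{s_O ∈ S_O} 𝔼_U(s_O) y(s_O)`. -/
def RDPobj (p U : Path St → ℝ) (y : OSeg St D I → ℝ) : ℝ :=
  ∑ t : OSeg St D I, segEU St D I p U t * y t

/-- The influence diagram is acyclic: there is a rank function decreasing along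
information arcs. -/
def Acyclic : Prop := ∃ r : ν → ℕ, ∀ n : ν, ∀ m ∈ I n, r m < r n

lemma indicator_feasible (Γ z : ZAsg St D I) (hΓ : ValidSegBigM St D I Γ)
    (hz : Strategy St D I z) :
    RDP St D I Γ z (fun t => if SegCompat St D I z t then (1 : ℝ) else 0) := by
  refine ⟨hz, fun t => by dsimp only; split <;> norm_num, ?_⟩
  intro d hd sd sI
  rw [Finset.sum_boole]
  rcases hz.1 d hd sd sI with h0 | h1
  · rw [h0, mul_zero]
    have hempty : (univ.filter (fun t : OSeg St D I =>
        t ⟨d, mem_obsSet_of_mem_D D I hd⟩ = sd ∧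
        ∀ n : I d, t ⟨n.1, mem_obsSet_of_mem_I D I hd n.2⟩ = sI n)).filter
        (fun t => SegCompat St D I z t) = ∅ := by
      ext t
      simp only [Finset.mem_filter, Finset.mem_univ, true_and, Finset.notMem_empty,
        iff_false, not_and]
      rintro ⟨htd, htI⟩ hc
      have := hc d hd
      rw [htd] at this
      have heq : (fun n : I d => t ⟨n.1, mem_obsSet_of_mem_I D I hd n.2⟩) = sI :=
        funext fun n => htI n
      rw [heq] at this
      rw [this] at h0
      norm_num at h0
    rw [hempty]
    simp
  · rw [h1, mul_one]
    have := hΓ z hz d hd sd sI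
    have hset : (univ.filter (fun t : OSeg St D I =>
        t ⟨d, mem_obsSet_of_mem_D D I hd⟩ = sd ∧
        ∀ n : I d, t ⟨n.1, mem_obsSet_of_mem_I D I hd n.2⟩ = sI n)).filter
        (fun t => SegCompat St D I z t) =
        univ.filter (fun t : OSeg St D I =>
          SegCompat St D I z t ∧
          t ⟨d, mem_obsSet_of_mem_D D I hd⟩ = sd ∧
          ∀ n : I d, t ⟨n.1, mem_obsSet_of_mem_I D I hd n.2⟩ = sI n) := by
      ext t; simp only [Finset.mem_filter, Finset.mem_univ, true_and]; tauto
    rw [hset]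
    exact this

lemma segEU_nonneg (p U : Path St → ℝ) (hp : ∀ s : Path St, 0 ≤ p s)
    (hU : ∀ s : Path St, 0 < U s) (t : OSeg St D I) :
    0 ≤ segEU St D I p U t :=
  Finset.sum_nonneg fun s _ => mul_nonneg (hp s) (hU s).le

lemma obj_le_indicator (p U : Path St → ℝ) (Γ z : ZAsg St D I) (y : OSeg St D I → ℝ)
    (hp : ∀ s : Path St, 0 ≤ p s) (hU : ∀ s : Path St, 0 < U s)
    (hRDP : RDP St D I Γ z y) :
    RDPobj St D I p U y
      ≤ RDPobj St D I p U (fun t => if SegCompat St D I z t then (1 : ℝ) else 0) := by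
  apply Finset.sum_le_sum
  intro t _
  apply mul_le_mul_of_nonneg_left _ (segEU_nonneg St D I p U hp hU t)
  by_cases hc : SegCompat St D I z t
  · simp only [hc, if_true]
    exact (hRDP.2.1 t).2
  · simp only [hc, if_false]
    -- show y t ≤ 0
    unfold SegCompat at hc
    push_neg at hc
    obtain ⟨d, hd, hne⟩ := hc
    have h0 : z d hd (t ⟨d, mem_obsSet_of_mem_D D I hd⟩)
        (fun n => t ⟨n.1, mem_obsSet_of_mem_I D I hd n.2⟩) = 0 := by
      rcases hRDP.1.1 d hd (t ⟨d, mem_obsSet_of_mem_D D I hd⟩)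
        (fun n => t ⟨n.1, mem_obsSet_of_mem_I D I hd n.2⟩) with h | h
      · exact h
      · exact absurd h hne
    have hcon := hRDP.2.2 d hd (t ⟨d, mem_obsSet_of_mem_D D I hd⟩)
      (fun n => t ⟨n.1, mem_obsSet_of_mem_I D I hd n.2⟩)
    rw [h0, mul_zero] at hcon
    have hmem : t ∈ univ.filter (fun t' : OSeg St D I =>
        t' ⟨d, mem_obsSet_of_mem_D D I hd⟩ = t ⟨d, mem_obsSet_of_mem_D D I hd⟩ ∧
        ∀ n : I d, t' ⟨n.1, mem_obsSet_of_mem_I D I hd n.2⟩ =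
          t ⟨n.1, mem_obsSet_of_mem_I D I hd n.2⟩) := by
      simp
    calc y t ≤ ∑ t' ∈ univ.filter (fun t' : OSeg St D I =>
        t' ⟨d, mem_obsSet_of_mem_D D I hd⟩ = t ⟨d, mem_obsSet_of_mem_D D I hd⟩ ∧
        ∀ n : I d, t' ⟨n.1, mem_obsSet_of_mem_I D I hd n.2⟩ =
          t ⟨n.1, mem_obsSet_of_mem_I D I hd n.2⟩), y t' :=
        Finset.single_le_sum (fun t' _ => (hRDP.2.1 t').1) hmem
      _ ≤ 0 := hcon

/-- given a valid segment big-M, `p ≥ 0` and `U > 0`, replacing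
the observation variables of an RDP-feasible solution by the indicator of
`z`-compatibility keeps feasibility and does not decrease the objective; hence the
maximum of the reformulated objective over RDP is attained at a binary solution. -/
theorem statement17 (p U : Path St → ℝ) (Γ z : ZAsg St D I) (y : OSeg St D I → ℝ)
    (hΓ : ValidSegBigM St D I Γ)
    (hp : ∀ s : Path St, 0 ≤ p s) (hU : ∀ s : Path St, 0 < U s)
    (hRDP : RDP St D I Γ z y) :
    RDP St D I Γ z (fun t => if SegCompat St D I z t then (1 : ℝ) else 0) ∧
    RDPobj St D I p U y
      ≤ RDPobj St D I p U (fun t => if SegCompat St D I z t then (1 : ℝ) else 0) ∧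
    ∃ (yb : OSeg St D I → ℝ) (zb : ZAsg St D I),
      RDP St D I Γ zb yb ∧ (∀ t : OSeg St D I, yb t = 0 ∨ yb t = 1) ∧
      ∀ (y' : OSeg St D I → ℝ) (z' : ZAsg St D I), RDP St D I Γ z' y' →
        RDPobj St D I p U y' ≤ RDPobj St D I p U yb := by
  classical
  refine ⟨indicator_feasible St D I Γ z hΓ hRDP.1,
    obj_le_indicator St D I p U Γ z y hp hU hRDP, ?_⟩
  -- encode binary strategies by Bool-valued functions
  let zOf : ((d : ν) → St d → Seg St (I d) → Bool) → ZAsg St D I :=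
    fun b d _ sd sI => if b d sd sI then (1 : ℝ) else 0
  have hrep : ∀ z' : ZAsg St D I, Strategy St D I z' → ∃ b, zOf b = z' := by
    intro z' hz'
    refine ⟨fun d sd sI => if h : d ∈ D then decide (z' d h sd sI = 1) else true, ?_⟩
    funext d hd sd sI
    simp only [zOf, dif_pos hd]
    rcases hz'.1 d hd sd sI with h | h <;> simp [h]
  let F : ((d : ν) → St d → Seg St (I d) → Bool) → ℝ :=
    fun b => RDPobj St D I p U (fun t => if SegCompat St D I (zOf b) t then (1 : ℝ) else 0)
  obtain ⟨b0, hb0⟩ := hrep z hRDP.1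
  have hb0mem : b0 ∈ univ.filter (fun b => Strategy St D I (zOf b)) := by
    simp only [Finset.mem_filter, Finset.mem_univ, true_and, hb0]
    exact hRDP.1
  obtain ⟨bm, hbm, hmax⟩ := Finset.exists_max_image
    (univ.filter (fun b => Strategy St D I (zOf b))) F ⟨b0, hb0mem⟩
  have hzm : Strategy St D I (zOf bm) := (Finset.mem_filter.mp hbm).2
  refine ⟨fun t => if SegCompat St D I (zOf bm) t then (1 : ℝ) else 0, zOf bm,
    indicator_feasible St D I Γ (zOf bm) hΓ hzm,
    fun t => by by_cases h : SegCompat St D I (zOf bm) t <;> simp [h], ?_⟩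
  intro y' z' hRDP'
  obtain ⟨b', hb'⟩ := hrep z' hRDP'.1
  have hb'mem : b' ∈ univ.filter (fun b => Strategy St D I (zOf b)) := by
    simp only [Finset.mem_filter, Finset.mem_univ, true_and, hb']
    exact hRDP'.1
  calc RDPobj St D I p U y'
      ≤ RDPobj St D I p U (fun t => if SegCompat St D I z' t then (1 : ℝ) else 0) :=
        obj_le_indicator St D I p U Γ z' y' hp hU hRDP'
    _ = F b' := by rw [← hb']
    _ ≤ F bm := hmax b' hb'mem

end
end InfluenceDiagram
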